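/- Committal rate main theorem: let A be any policy optimization algorithm, i.e. for each t ≥ 1 a deterministic map from histories (θ_1, a_1, r(a_1), …, θ_t, a_t, r(a_t)) to θ_{t+1} ∈ ℝ^K. Fix a sub-optimal action a (r(a) < r(a*)) with π_{θ_1}(a) > 0, and let (θ̃_t)_{t≥1} be the deterministic parameter sequence produced by A when the action a is sampled at every step. Suppose there exist α > 1 and C < ∞ with t^α·(1 − π_{θ̃_t}(a)) ≤ C for all t ≥ 1 (i.e. κ(A, a) > 1). Then in any on-policy process driven by A, P(a_t = a for all t ≥ 1) = ∏_{t=1}^∞ π_{θ̃_t}(a) > 0, and on this event π_{θ_t}(a) → 1; consequently A does not converge to the globally optimal policy almost surely. Hence κ(A, a) ≤ 1 for every sub-optimal action a with π_{θ_1}(a) > 0 is necessary for almost-sure convergence to global optimality. -/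

import Mathlib

/-!
Along the event that `a` is sampled at every step, the on-policy parameters coincide with the
deterministic sequence `θ̃`, so the conditional sampling law gives the event probability
`∏ₜ π_{θ̃ₜ}(a)`, one factor per step. The committal rate `α > 1` makes `∑ₜ (1 - π_{θ̃ₜ}(a))`
summable, so this product is positive; on the event `π(a) → 1`, which leaves no room for
`π(a*) → 1`.
-/

open Finset Real Filter MeasureTheory

/-- Softmax policy: `π_θ(a) = exp(θ(a)) / Σ_{a'} exp(θ(a'))`. -/
noncomputable def softmax {K : ℕ} (θ : Fin K → ℝ) (a : Fin K) : ℝ :=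
  Real.exp (θ a) / ∑ a', Real.exp (θ a')

section Softmax

variable {K : ℕ}

lemma sum_exp_pos (θ : Fin K → ℝ) (b : Fin K) : 0 < ∑ a', Real.exp (θ a') :=
  Finset.sum_pos (fun _ _ => Real.exp_pos _) ⟨b, Finset.mem_univ b⟩

lemma softmax_pos (θ : Fin K → ℝ) (b : Fin K) : 0 < softmax θ b :=
  div_pos (Real.exp_pos _) (sum_exp_pos θ b)

lemma softmax_le_one (θ : Fin K → ℝ) (b : Fin K) : softmax θ b ≤ 1 := by
  rw [softmax, div_le_one (sum_exp_pos θ b)]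
  exact Finset.single_le_sum (fun i _ => (Real.exp_pos (θ i)).le) (Finset.mem_univ b)

lemma softmax_add_softmax_le_one (θ : Fin K → ℝ) {b c : Fin K} (h : b ≠ c) :
    softmax θ b + softmax θ c ≤ 1 := by
  rw [softmax, softmax, ← add_div, div_le_one (sum_exp_pos θ b)]
  exact Finset.add_le_sum (fun i _ => (Real.exp_pos (θ i)).le) (Finset.mem_univ b)
    (Finset.mem_univ c) h

lemma not_tendsto_softmax_of_tendsto_softmax {θ : ℕ → Fin K → ℝ} {b c : Fin K} (h : b ≠ c)
    (hb : Tendsto (fun t => softmax (θ t) b) atTop (nhds 1)) :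
    ¬ Tendsto (fun t => softmax (θ t) c) atTop (nhds 1) := fun hc => by
  have := le_of_tendsto (hb.add hc)
    (Eventually.of_forall fun t => softmax_add_softmax_le_one _ h)
  norm_num at this

end Softmax

lemma summable_of_rpow_mul_le {q : ℕ → ℝ} {α C : ℝ} (hα : 1 < α) (hq : ∀ t, 0 ≤ q t)
    (h : ∀ t : ℕ, ((t : ℝ) + 1) ^ α * q t ≤ C) : Summable q := by
  have hdom : Summable fun t : ℕ => C * (((t : ℝ) + 1) ^ α)⁻¹ := by
    refine Summable.mul_left C ?_
    exact_mod_cast (summable_nat_add_iff 1).2 (Real.summable_nat_rpow_inv.2 hα)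
  refine hdom.of_nonneg_of_le hq fun t => ?_
  rw [← div_eq_mul_inv, le_div_iff₀' (by positivity)]
  exact h t

lemma summable_log_of_summable_one_sub {ι : Type*} {p : ι → ℝ} (h : Summable fun i => 1 - p i) :
    Summable fun i => Real.log (p i) := by
  simpa using Real.summable_log_one_add_of_summable h.neg

lemma tprod_pos_of_summable_one_sub {ι : Type*} {p : ι → ℝ} (hp : ∀ i, 0 < p i)
    (h : Summable fun i => 1 - p i) : 0 < ∏' i, p i :=
  Real.rexp_tsum_eq_tprod hp (summable_log_of_summable_one_sub h) ▸ Real.exp_pos _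

lemma multipliable_of_summable_one_sub {ι : Type*} {p : ι → ℝ} (hp : ∀ i, 0 < p i)
    (h : Summable fun i => 1 - p i) : Multipliable p :=
  Real.multipliable_of_summable_log hp (summable_log_of_summable_one_sub h)

lemma tendsto_one_of_summable_one_sub {p : ℕ → ℝ} (h : Summable fun t => 1 - p t) :
    Tendsto p atTop (nhds 1) := by
  simpa using (tendsto_const_nhds (x := (1 : ℝ))).sub h.tendsto_atTop_zero

lemma map_range_eq_replicate {α : Type*} {f : ℕ → α} {x : α} {n : ℕ} (h : ∀ k < n, f k = x) :
    (List.range n).map f = List.replicate n x := by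
  rw [List.eq_replicate_iff]
  simp_all

lemma measureReal_inter_eq_mul_of_condExp_indicator {Ω : Type*} {m mΩ : MeasurableSpace Ω}
    {P : Measure Ω} [IsFiniteMeasure P] (hm : m ≤ mΩ) {s t : Set Ω}
    (hs : MeasurableSet[m] s) (ht : MeasurableSet t) {g : Ω → ℝ} {c : ℝ}
    (hg : P[t.indicator 1|m] =ᵐ[P] g) (hgs : ∀ ω ∈ s, g ω = c) :
    P.real (s ∩ t) = P.real s * c := by
  calc P.real (s ∩ t) = ∫ ω in s, t.indicator 1 ω ∂P := by
        rw [integral_indicator_one ht, measureReal_restrict_apply ht, Set.inter_comm]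
    _ = ∫ ω in s, g ω ∂P := by
        rw [← setIntegral_condExp hm ((integrable_const 1).indicator ht) hs]
        exact setIntegral_congr_ae (hm s hs) (hg.mono fun ω h _ => h)
    _ = P.real s * c := by
        rw [setIntegral_congr_fun (hm s hs) hgs, setIntegral_const, smul_eq_mul]

section OnPolicy

variable {Ω β : Type*} {mΩ : MeasurableSpace Ω} {P : Measure Ω} [IsProbabilityMeasure P]
  {F : Filtration ℕ mΩ} [MeasurableSpace β] [MeasurableSingletonClass β]
  {act : ℕ → Ω → β} {b : β}

lemma measurableSet_forall_lt_eq (hact : ∀ t, Measurable[F (t + 1)] (act t)) (n : ℕ) :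
    MeasurableSet[F n] {ω | ∀ t < n, act t ω = b} := by
  simp only [Set.ofPred_forall]
  exact .iInter fun t => .iInter fun ht =>
    F.mono ht _ (hact t (measurableSet_singleton b))

variable [DecidableEq β] {g : ℕ → Ω → ℝ} {p : ℕ → ℝ}

lemma measureReal_forall_lt_eq_prod (hact : ∀ t, Measurable[F (t + 1)] (act t))
    (hcond : ∀ t, P[fun ω => if act t ω = b then (1 : ℝ) else 0|F t] =ᵐ[P] g t)
    (hg : ∀ n ω, (∀ t < n, act t ω = b) → g n ω = p n) (n : ℕ) :
    P.real {ω | ∀ t < n, act t ω = b} = ∏ t ∈ Finset.range n, p t := by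
  induction n with
  | zero => simp
  | succ n ih =>
    have hstep : {ω | ∀ t < n + 1, act t ω = b} =
        {ω | ∀ t < n, act t ω = b} ∩ act n ⁻¹' {b} := by
      ext ω
      simp only [Set.mem_ofPred_eq, Set.mem_inter_iff, Set.mem_preimage, Set.mem_singleton_iff,
        Nat.forall_lt_succ_right]
    have hind : (act n ⁻¹' {b}).indicator 1 = fun ω => if act n ω = b then (1 : ℝ) else 0 := by
      ext ω
      by_cases h : act n ω = b <;> simp [h]
    rw [hstep, measureReal_inter_eq_mul_of_condExp_indicator (F.le n)
      (measurableSet_forall_lt_eq hact n) (F.le _ _ (hact n (measurableSet_singleton b)))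
      (hind ▸ hcond n) (hg n), ih, Finset.prod_range_succ]

lemma measure_forall_eq_ofReal_tprod (hact : ∀ t, Measurable[F (t + 1)] (act t))
    (hcond : ∀ t, P[fun ω => if act t ω = b then (1 : ℝ) else 0|F t] =ᵐ[P] g t)
    (hg : ∀ n ω, (∀ t < n, act t ω = b) → g n ω = p n) (hp : Multipliable p) :
    P {ω | ∀ t, act t ω = b} = ENNReal.ofReal (∏' t, p t) := by
  have hinter : {ω | ∀ t, act t ω = b} = ⋂ n, {ω | ∀ t < n, act t ω = b} := by
    ext ω
    simpa using ⟨fun h n t _ => h t, fun h t => h (t + 1) t t.lt_succ_self⟩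
  have hanti : Antitone fun n => {ω | ∀ t < n, act t ω = b} :=
    fun m n hmn ω hω t ht => hω t (ht.trans_le hmn)
  refine hinter ▸ tendsto_nhds_unique (tendsto_measure_iInter_atTop
    (fun n => (F.le n _ (measurableSet_forall_lt_eq hact n)).nullMeasurableSet) hanti
    ⟨0, measure_ne_top _ _⟩) ?_
  refine (ENNReal.tendsto_ofReal hp.hasProd.tendsto_prod_nat).congr fun n => ?_
  rw [← measureReal_forall_lt_eq_prod hact hcond hg n, ofReal_measureReal]
  rfl

end OnPolicy

/-- Here `θ t` is the paper's `θ_{t+1}` and `act t` the paper's `a_{t+1}`. -/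
theorem committal_rate_main_theorem_general
    {K : ℕ} (r : Fin K → ℝ)
    (astar : Fin K)
    (A : List (Fin K × ℝ) → (Fin K → ℝ))
    (a : Fin K) (ha : r a < r astar)
    (α C : ℝ) (hα : 1 < α)
    (hκ : ∀ t : ℕ,
      ((t : ℝ) + 1) ^ α * (1 - softmax (A (List.replicate t (a, r a))) a) ≤ C)
    {Ω : Type*} {mΩ : MeasurableSpace Ω} (P : Measure Ω) [IsProbabilityMeasure P]
    (F : Filtration ℕ mΩ)
    (act : ℕ → Ω → Fin K) (θ : ℕ → Ω → Fin K → ℝ)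
    (hθ : ∀ t ω, θ t ω = A ((List.range t).map fun k => (act k ω, r (act k ω))))
    (hactmeas : ∀ t, Measurable[F (t + 1)] (act t))
    (hcond : ∀ t b, P[(fun ω => if act t ω = b then (1 : ℝ) else 0)|F t]
      =ᵐ[P] fun ω => softmax (θ t ω) b) :
    P {ω | ∀ t, act t ω = a} =
        ENNReal.ofReal (∏' t : ℕ, softmax (A (List.replicate t (a, r a))) a) ∧
    0 < P {ω | ∀ t, act t ω = a} ∧
    (∀ ω, (∀ t, act t ω = a) →
      Tendsto (fun t => softmax (θ t ω) a) atTop (nhds 1)) ∧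
    ¬ (∀ᵐ ω ∂P, Tendsto (fun t => softmax (θ t ω) astar) atTop (nhds 1)) := by
  set p : ℕ → ℝ := fun t => softmax (A (List.replicate t (a, r a))) a
  have hp : ∀ t, 0 < p t := fun t => softmax_pos _ a
  have hsum : Summable fun t => 1 - p t :=
    summable_of_rpow_mul_le hα (fun t => sub_nonneg.2 (softmax_le_one _ a)) hκ
  have hθp : ∀ n ω, (∀ t < n, act t ω = a) → softmax (θ n ω) a = p n := fun n ω h => by
    rw [hθ, map_range_eq_replicate fun k hk => by rw [h k hk]]
  have hprob : P {ω | ∀ t, act t ω = a} = ENNReal.ofReal (∏' t, p t) :=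
    measure_forall_eq_ofReal_tprod hactmeas (fun t => hcond t a) hθp
      (multipliable_of_summable_one_sub hp hsum)
  have hprob_pos : 0 < P {ω | ∀ t, act t ω = a} :=
    hprob ▸ ENNReal.ofReal_pos.2 (tprod_pos_of_summable_one_sub hp hsum)
  have hcommit :
      ∀ ω, (∀ t, act t ω = a) → Tendsto (fun t => softmax (θ t ω) a) atTop (nhds 1) :=
    fun ω hω => (tendsto_one_of_summable_one_sub hsum).congr fun t =>
      (hθp t ω fun k _ => hω k).symm
  refine ⟨hprob, hprob_pos, hcommit, fun hopt => ?_⟩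
  obtain ⟨ω, hωopt, hω⟩ :=
    (hopt.and_frequently (frequently_ae_mem_iff.2 hprob_pos.ne')).exists
  exact not_tendsto_softmax_of_tendsto_softmax (fun h => ha.ne (congrArg r h))
    (hcommit ω hω) hωopt

/-- Committal rate main theorem.  A policy optimization algorithm `A` maps a history
of action–reward pairs to the next parameter vector (so `θ_1 = A []` and
`θ_{t+1} = A [(a_1, r(a_1)), …, (a_t, r(a_t))]`).  Fix a sub-optimal action `a`
(`r(a) < r(a*)`) with `π_{θ_1}(a) > 0`, and let `θ̃ t = A (replicate t (a, r a))`
be the parameter sequence produced when `a` is sampled at every step.  If there are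
`α > 1` and `C` with `t^α·(1 − π_{θ̃_t}(a)) ≤ C` for all `t` (i.e. `κ(A, a) > 1`),
then in any on-policy process driven by `A`:
`P(a_t = a for all t) = ∏_t π_{θ̃_t}(a) > 0`, on this event `π_{θ_t}(a) → 1`, and
consequently the policies do not converge to the globally optimal policy almost
surely.  (Here `θ t` is the paper's `θ_{t+1}` and `act t` the paper's `a_{t+1}`.) -/
theorem committal_rate_main_theorem
    {K : ℕ} (hK : 2 ≤ K) (r : Fin K → ℝ)
    (hr : ∀ a, 0 < r a ∧ r a ≤ 1)
    (astar : Fin K) (hstar : ∀ a, a ≠ astar → r a < r astar)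
    (A : List (Fin K × ℝ) → (Fin K → ℝ))
    (a : Fin K) (ha : r a < r astar)
    (hpos : 0 < softmax (A []) a)
    (α C : ℝ) (hα : 1 < α)
    (hκ : ∀ t : ℕ,
      ((t : ℝ) + 1) ^ α * (1 - softmax (A (List.replicate t (a, r a))) a) ≤ C)
    {Ω : Type*} {mΩ : MeasurableSpace Ω} (P : Measure Ω) [IsProbabilityMeasure P]
    (F : Filtration ℕ mΩ)
    (act : ℕ → Ω → Fin K) (θ : ℕ → Ω → Fin K → ℝ)
    (hθ : ∀ t ω, θ t ω = A ((List.range t).map fun k => (act k ω, r (act k ω))))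
    (hactmeas : ∀ t, Measurable[F (t + 1)] (act t))
    (hcond : ∀ t b, P[(fun ω => if act t ω = b then (1 : ℝ) else 0)|F t]
      =ᵐ[P] fun ω => softmax (θ t ω) b) :
    P {ω | ∀ t, act t ω = a} =
        ENNReal.ofReal (∏' t : ℕ, softmax (A (List.replicate t (a, r a))) a) ∧
    0 < P {ω | ∀ t, act t ω = a} ∧
    (∀ ω, (∀ t, act t ω = a) →
      Tendsto (fun t => softmax (θ t ω) a) atTop (nhds 1)) ∧
    ¬ (∀ᵐ ω ∂P, Tendsto (fun t => softmax (θ t ω) astar) atTop (nhds 1)) :=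
  committal_rate_main_theorem_general r astar A a ha α C hα hκ P F act θ hθ hactmeas hcond
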